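/- arXiv:2106.04000 — 2 statements merged into one kernel-verified Lean document; each statement's English description precedes it below -/
import Mathlib

section
/- Let f : Λ → ℂ be discrete analytic. Then for any z ∈ Λ and any two paths γ₁, γ₂ in Λ from 0 to z, ∫_{γ₁} f δz = ∫_{γ₂} f δz; consequently F(z) := ∫_0^z f δz (the integral taken along any path from 0 to z) is a well-defined function on Λ, and F is itself discrete analytic. -/
open Complex Finset GaussianInt

noncomputable section

/-- The lattice point `i` in the Gaussian integers. -/
def ii : GaussianInt := ⟨0, 1⟩

/-- `f` is discrete analytic on the whole lattice `Λ = ℤ + iℤ`. -/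
def DAnalytic (f : GaussianInt → ℂ) : Prop :=
  ∀ z : GaussianInt,
    (f (z + 1 + ii) - f z) / (1 + Complex.I) = (f (z + 1) - f (z + ii)) / (1 - Complex.I)

/-- `f` is discrete analytic on the right half lattice `Λ₊ = {z : Re z ≥ 0}`. -/
def DAnalyticOn (f : GaussianInt → ℂ) : Prop :=
  ∀ z : GaussianInt, 0 ≤ z.re →
    (f (z + 1 + ii) - f z) / (1 + Complex.I) = (f (z + 1) - f (z + ii)) / (1 - Complex.I)

/-- `γ 0, γ 1, …, γ n` is a path in the lattice from `a` to `b`: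
consecutive points are at distance `1`. -/
def IsPath (γ : ℕ → GaussianInt) (n : ℕ) (a b : GaussianInt) : Prop :=
  γ 0 = a ∧ γ n = b ∧ ∀ k < n, ‖(γ (k + 1) : ℂ) - (γ k : ℂ)‖ = 1

/-- The discrete integral `∫_γ f δz` along the path `γ 0, …, γ n`. -/
def discInt (f : GaussianInt → ℂ) (γ : ℕ → GaussianInt) (n : ℕ) : ℂ :=
  ∑ k ∈ Finset.range n, ((f (γ k) + f (γ (k + 1))) / 2) * ((γ (k + 1) : ℂ) - (γ k : ℂ))

/-- The canonical lattice path from `0` to `z`: first along the real axis, then vertically. -/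
def cpath (z : GaussianInt) (k : ℕ) : GaussianInt :=
  ⟨z.re.sign * ((min k z.re.natAbs : ℕ) : ℤ),
   z.im.sign * ((min k (z.re.natAbs + z.im.natAbs) - z.re.natAbs : ℕ) : ℤ)⟩

/-- The length of the canonical path from `0` to `z`. -/
def cpathLen (z : GaussianInt) : ℕ := z.re.natAbs + z.im.natAbs

/-- The operator `Z`: `Zf(z) = (f(0) - f(z))/2 + ∫_0^z f δz`, the integral being taken
along the canonical path (for discrete analytic `f` the integral is path-independent). -/
def Zop (f : GaussianInt → ℂ) : GaussianInt → ℂ := fun z =>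
  (f 0 - f z) / 2 + discInt f (cpath z) (cpathLen z)

/-- The basic discrete analytic polynomials `z⁽ⁿ⁾ = Zⁿ1`. -/
def zpoly (n : ℕ) : GaussianInt → ℂ := Zop^[n] (fun _ => 1)

/-- `α₊ = (1+i)/2`. -/
def aPlus : ℂ := (1 + Complex.I) / 2
/-- `α₋ = (1-i)/2`. -/
def aMinus : ℂ := (1 - Complex.I) / 2

/-- The difference operator `δx`. -/
def dxOp (f : GaussianInt → ℂ) : GaussianInt → ℂ := fun z => f (z + 1) - f z
/-- The difference operator `δy`. -/
def dyOp (f : GaussianInt → ℂ) : GaussianInt → ℂ := fun z => f (z + ii) - f z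

/-- `f` belongs to the Hardy space `H₂(Λ₊)` with coefficient sequence `c`:
`f(z) = Σ c(n) z⁽ⁿ⁾(z)` on `Λ₊` and `Σ |c(n)|² < ∞`. -/
def MemH2 (f : GaussianInt → ℂ) (c : ℕ → ℂ) : Prop :=
  Summable (fun n => ‖c n‖ ^ 2) ∧
  ∀ z : GaussianInt, 0 ≤ z.re → HasSum (fun n => c n * zpoly n z) (f z)

/-!
For discrete analytic `f`, the identity defining discrete analyticity says exactly that the
discrete 1-form `f δz` has zero circulation around every unit square. A form on `ℤ[i]` with
this property has a primitive `F`: sum the horizontal edge terms along the real axis, then the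
vertical ones up the column, and closedness makes the horizontal steps consistent away from the
axis too. Every discrete path integral then telescopes to `F b - F a`, and `F`, whose increments
are averages of `f`, inherits discrete analyticity from `f`.
-/

section Potential

variable {M : Type*} [AddCommGroup M]

def sumTo (g : ℤ → M) (n : ℤ) : M := ∑ k ∈ Ico 0 n, g k - ∑ k ∈ Ico n 0, g k

@[simp]
theorem sumTo_zero (g : ℤ → M) : sumTo g 0 = 0 := by simp [sumTo]

theorem sumTo_add_one (g : ℤ → M) (n : ℤ) : sumTo g (n + 1) = sumTo g n + g n := by
  rcases le_or_gt 0 n with hn | hn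
  · simp [sumTo, hn, ← sum_Ico_add_eq_sum_Ico_add_one hn,
      Ico_eq_empty_of_le (by omega : (0 : ℤ) ≤ n + 1)]
  · rw [sumTo, sumTo, ← insert_Ico_add_one_left_eq_Ico hn, sum_insert (by simp),
      Ico_eq_empty_of_le hn.le, Ico_eq_empty_of_le (by omega : n + 1 ≤ 0)]
    abel

theorem mk_add_one (x y : ℤ) : (⟨x, y⟩ + 1 : GaussianInt) = ⟨x + 1, y⟩ := by
  ext <;> simp

theorem mk_add_ii (x y : ℤ) : (⟨x, y⟩ + ii : GaussianInt) = ⟨x, y + 1⟩ := by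
  ext <;> simp [ii]

theorem sumTo_column_add_one_sub {h v : GaussianInt → M}
    (hclosed : ∀ z, h z + v (z + 1) = v z + h (z + ii)) (x y : ℤ) :
    sumTo (fun t => v ⟨x + 1, t⟩) y - sumTo (fun t => v ⟨x, t⟩) y = h ⟨x, y⟩ - h ⟨x, 0⟩ := by
  have hper : Function.Periodic
      (fun t => sumTo (fun t => v ⟨x + 1, t⟩) t - sumTo (fun t => v ⟨x, t⟩) t - h ⟨x, t⟩) 1 := by
    intro t
    have hsquare := hclosed ⟨x, t⟩
    rw [mk_add_one, mk_add_ii] at hsquare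
    simp only [sumTo_add_one]
    rw [← sub_eq_zero, ← sub_eq_zero.mpr hsquare]
    abel
  have hy := hper.int_mul_eq y
  simp only [Int.cast_id, mul_one, sumTo_zero] at hy
  rw [← sub_eq_zero, ← sub_eq_zero.mpr hy]
  abel

theorem exists_potential_of_closed (h v : GaussianInt → M)
    (hclosed : ∀ z, h z + v (z + 1) = v z + h (z + ii)) :
    ∃ F : GaussianInt → M, ∀ z, F (z + 1) = F z + h z ∧ F (z + ii) = F z + v z := by
  refine ⟨fun z => sumTo (fun x => h ⟨x, 0⟩) z.re + sumTo (fun y => v ⟨z.re, y⟩) z.im,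
    fun ⟨x, y⟩ => ⟨?_, ?_⟩⟩
  · have hcol := sumTo_column_add_one_sub hclosed x y
    simp only [mk_add_one, sumTo_add_one]
    rw [← sub_eq_zero, ← sub_eq_zero.mpr hcol]
    abel
  · simp only [mk_add_ii, sumTo_add_one]
    abel

end Potential

section DiscretePrimitive

variable {f F : GaussianInt → ℂ}

theorem toComplex_ii : ((ii : GaussianInt) : ℂ) = I := by
  simp [ii, toComplex_def']

theorem eq_pm_one_or_eq_pm_ii_of_norm_eq_one {w : GaussianInt} (hw : ‖(w : ℂ)‖ = 1) :
    w = 1 ∨ w = -1 ∨ w = ii ∨ w = -ii := by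
  obtain ⟨x, y⟩ := w
  have hsq : x * x + y * y = 1 := by
    have := congrArg (· ^ 2) hw
    simp only [Complex.sq_norm, Complex.normSq_apply, re_toComplex, im_toComplex] at this
    exact_mod_cast this
  simp only [Zsqrtd.ext_iff, ii]
  obtain ⟨hx1, hx2⟩ : -1 ≤ x ∧ x ≤ 1 := by constructor <;> nlinarith
  obtain ⟨hy1, hy2⟩ : -1 ≤ y ∧ y ≤ 1 := by constructor <;> nlinarith
  interval_cases x <;> interval_cases y <;> simp_all

theorem dAnalytic_iff :
    DAnalytic f ↔ ∀ z, (1 - I) * (f (z + 1 + ii) - f z) = (1 + I) * (f (z + 1) - f (z + ii)) := by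
  have h1 : (1 + I) ≠ 0 := fun h => by simpa using congrArg Complex.im h
  have h2 : (1 - I) ≠ 0 := fun h => by simpa using congrArg Complex.im h
  refine forall_congr' fun z => ?_
  rw [div_eq_div_iff h1 h2, mul_comm, eq_comm, mul_comm (f (z + 1) - _), eq_comm]

theorem DAnalytic.sub_const (hF : DAnalytic F) (c : ℂ) : DAnalytic fun z => F z - c := by
  intro z
  simpa only [sub_sub_sub_cancel_right] using hF z

/-- Each increment of `F` is the discrete integral of `f` over the corresponding edge. -/
def IsDiscretePrimitive (f F : GaussianInt → ℂ) : Prop :=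
  ∀ z, F (z + 1) = F z + (f z + f (z + 1)) / 2 ∧ F (z + ii) = F z + (f z + f (z + ii)) / 2 * I

theorem DAnalytic.exists_isDiscretePrimitive (hf : DAnalytic f) :
    ∃ F, IsDiscretePrimitive f F :=
  exists_potential_of_closed _ _ fun z => by
    rw [add_right_comm z ii 1]
    linear_combination -dAnalytic_iff.1 hf z / 2

theorem IsDiscretePrimitive.dAnalytic (hf : DAnalytic f) (hF : IsDiscretePrimitive f F) :
    DAnalytic F := by
  rw [dAnalytic_iff] at hf ⊢
  intro z
  rw [(hF (z + 1)).2, (hF z).1, (hF z).2]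
  linear_combination I / 2 * hf z

theorem IsDiscretePrimitive.mul_sub_eq (hF : IsDiscretePrimitive f F) {a b : GaussianInt}
    (hab : ‖(b : ℂ) - a‖ = 1) : (f a + f b) / 2 * ((b : ℂ) - a) = F b - F a := by
  rw [← toComplex_sub] at hab ⊢
  rcases eq_pm_one_or_eq_pm_ii_of_norm_eq_one hab with h | h | h | h
  · have hb : b = a + 1 := by linear_combination h
    rw [h, hb, (hF a).1, toComplex_one]
    ring
  · have ha : a = b + 1 := by linear_combination -h
    rw [h, ha, (hF b).1, toComplex_neg, toComplex_one]
    ring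
  · have hb : b = a + ii := by linear_combination h
    rw [h, hb, (hF a).2, toComplex_ii]
    ring
  · have ha : a = b + ii := by linear_combination -h
    rw [h, ha, (hF b).2, toComplex_neg, toComplex_ii]
    ring

theorem IsDiscretePrimitive.discInt_eq (hF : IsDiscretePrimitive f F) {γ : ℕ → GaussianInt}
    {n : ℕ} {a b : GaussianInt} (hγ : IsPath γ n a b) : discInt f γ n = F b - F a := by
  obtain ⟨rfl, rfl, hstep⟩ := hγ
  rw [discInt, sum_congr rfl fun k hk => hF.mul_sub_eq (hstep k (mem_range.1 hk))]
  exact sum_range_sub (fun k => F (γ k)) n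

end DiscretePrimitive

section CanonicalPath

variable {z : GaussianInt} {k : ℕ}

theorem cpath_of_le_natAbs_re (hk : k ≤ z.re.natAbs) : cpath z k = ⟨z.re.sign * k, 0⟩ := by
  simp [cpath, hk, Nat.sub_eq_zero_of_le, min_eq_left (hk.trans (Nat.le_add_right _ _))]

theorem cpath_of_natAbs_re_le (h₁ : z.re.natAbs ≤ k) (h₂ : k ≤ cpathLen z) :
    cpath z k = ⟨z.re, z.im.sign * (k - z.re.natAbs : ℕ)⟩ := by
  unfold cpathLen at h₂
  rw [cpath, min_eq_right h₁, min_eq_left h₂, Int.sign_mul_natAbs]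

theorem norm_toComplex_sign (x : ℤ) (hx : x ≠ 0) : ‖((x.sign : ℤ) : ℂ)‖ = 1 := by
  rw [Complex.norm_intCast]
  exact_mod_cast Int.abs_sign_of_ne_zero hx

theorem cpath_isPath (z : GaussianInt) : IsPath (cpath z) (cpathLen z) 0 z := by
  refine ⟨?_, ?_, fun k hk => ?_⟩
  · rw [cpath_of_le_natAbs_re (Nat.zero_le _), Nat.cast_zero, mul_zero]
    rfl
  · rw [cpath_of_natAbs_re_le (k := cpathLen z) (Nat.le_add_right _ _) le_rfl, cpathLen,
      Nat.add_sub_cancel_left, Int.sign_mul_natAbs]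
  rcases lt_or_ge k z.re.natAbs with hk' | hk'
  · have hre : z.re ≠ 0 := by omega
    rw [cpath_of_le_natAbs_re (k := k + 1) hk', cpath_of_le_natAbs_re hk'.le, toComplex_def',
      toComplex_def']
    push_cast
    ring_nf
    exact norm_toComplex_sign _ hre
  · have him : z.im ≠ 0 := by unfold cpathLen at hk; omega
    rw [cpath_of_natAbs_re_le (k := k + 1) (by omega) hk, cpath_of_natAbs_re_le hk' hk.le,
      toComplex_def', toComplex_def', Nat.sub_add_comm hk']
    push_cast
    ring_nf
    rw [norm_mul, norm_toComplex_sign _ him, Complex.norm_I, one_mul]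

end CanonicalPath

/-- For a discrete analytic `f`, the discrete integral from `0` to `z` is
path-independent; hence `F(z) = ∫₀ᶻ f δz` (computed along any path, e.g. the canonical one)
is well defined, and `F` is itself discrete analytic. -/
theorem stmt1 (f : GaussianInt → ℂ) (hf : DAnalytic f) :
    (∀ (z : GaussianInt) (γ₁ γ₂ : ℕ → GaussianInt) (n₁ n₂ : ℕ),
        IsPath γ₁ n₁ 0 z → IsPath γ₂ n₂ 0 z → discInt f γ₁ n₁ = discInt f γ₂ n₂) ∧
    DAnalytic (fun z => discInt f (cpath z) (cpathLen z)) := by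
  obtain ⟨F, hF⟩ := hf.exists_isDiscretePrimitive
  have hcanonical : ∀ z, discInt f (cpath z) (cpathLen z) = F z - F 0 :=
    fun z => hF.discInt_eq (cpath_isPath z)
  refine ⟨fun z γ₁ γ₂ n₁ n₂ h₁ h₂ => by rw [hF.discInt_eq h₁, hF.discInt_eq h₂], ?_⟩
  simpa only [hcanonical] using (hF.dAnalytic hf).sub_const (F 0)

end
end

section
/- For every z ∈ Λ₊ (i.e., z ∈ Λ with Re z ≥ 0), limsup_{n→∞} |z^{(n)}(z)|^{1/n} ≤ 1/√2; equivalently, for every r with 1/√2 < r, the sequence |z^{(n)}(z)|/rⁿ is bounded. -/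
open Complex Finset GaussianInt

noncomputable section

/-!
Along the canonical path `0 = γ₀, …, γ_L = z` the definition of `Z` unfolds to the recursion
`Zf(γ_{m+1}) = Zf(γ_m) + (1 + d)/2 · f(γ_m) + (d - 1)/2 · f(γ_{m+1})`, `d = γ_{m+1} - γ_m`.
Since `Re z ≥ 0` every step `d` is `1`, `i` or `-i`, so the two coefficients have modulus at most
`1` and `1/√2`. A double induction on `n` and `m` then gives
`|z⁽ⁿ⁾(γ_m)| ≤ (3n + 1)ᵐ (1/√2)ⁿ`, the step `3` of the base absorbing the factor `1 + √2`;
at `m = L` the polynomial factor `(3n + 1)ᴸ` is beaten by the geometric decay of `(1/(√2 r))ⁿ`.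
-/

open Filter Topology

lemma sign_mul_natCast_sign_mul (x : ℤ) {n p : ℕ} (h : p ≤ n) :
    (x.sign * n).sign * p = x.sign * p := by
  rcases Nat.eq_zero_or_pos n with hn | hn
  · obtain rfl : p = 0 := by omega
    simp
  · rw [Int.sign_mul, Int.sign_sign, Int.sign_natCast_of_ne_zero hn.ne', mul_one]

lemma int_sign_cases (x : ℤ) :
    (x.sign = 1 ∧ 0 < x) ∨ (x.sign = 0 ∧ x = 0) ∨ (x.sign = -1 ∧ x < 0) := by
  rcases lt_trichotomy x 0 with h | h | h
  · exact .inr (.inr ⟨Int.sign_eq_neg_one_of_neg h, h⟩)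
  · exact .inr (.inl ⟨by simp [h], h⟩)
  · exact .inl ⟨Int.sign_eq_one_of_pos h, h⟩

lemma cpath_re (z : GaussianInt) (k : ℕ) :
    (cpath z k).re = z.re.sign * (min k z.re.natAbs : ℕ) := rfl

lemma cpath_im (z : GaussianInt) (k : ℕ) :
    (cpath z k).im = z.im.sign * (min k (cpathLen z) - z.re.natAbs : ℕ) := rfl

lemma cpath_re_natAbs (z : GaussianInt) (k : ℕ) : (cpath z k).re.natAbs = min k z.re.natAbs := by
  simp only [cpath_re, Int.natAbs_mul, Int.natAbs_sign, Int.natAbs_natCast]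
  split_ifs <;> omega

lemma cpath_im_natAbs (z : GaussianInt) (k : ℕ) :
    (cpath z k).im.natAbs = min k (cpathLen z) - z.re.natAbs := by
  simp only [cpath_im, cpathLen, Int.natAbs_mul, Int.natAbs_sign, Int.natAbs_natCast]
  split_ifs <;> omega

lemma cpathLen_cpath (z : GaussianInt) (k : ℕ) : cpathLen (cpath z k) = min k (cpathLen z) := by
  rw [cpathLen, cpath_re_natAbs, cpath_im_natAbs, cpathLen]
  omega

lemma cpath_zero (z : GaussianInt) : cpath z 0 = 0 := by
  simp [cpath, Zsqrtd.ext_iff]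

lemma cpath_cpathLen (z : GaussianInt) : cpath z (cpathLen z) = z := by
  rw [Zsqrtd.ext_iff, cpath_re, cpath_im, cpathLen]
  constructor
  · rw [min_eq_right (by omega), Int.sign_mul_natAbs]
  · rw [min_self, Nat.add_sub_cancel_left, Int.sign_mul_natAbs]

lemma cpath_cpath (z : GaussianInt) {k m : ℕ} (hk : k ≤ m) (hm : m ≤ cpathLen z) :
    cpath (cpath z m) k = cpath z k := by
  rw [Zsqrtd.ext_iff, cpath_re, cpath_im (cpath z m), cpath_re_natAbs, cpathLen_cpath, cpath_re z m,
    cpath_im z m, sign_mul_natCast_sign_mul _ (by omega), sign_mul_natCast_sign_mul _ (by omega),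
    cpath_re z k, cpath_im z k]
  constructor <;> congr 2 <;> omega

lemma cpath_succ_sub_cpath {z : GaussianInt} (hz : 0 ≤ z.re) {m : ℕ} (hm : m < cpathLen z) :
    cpath z (m + 1) - cpath z m = 1 ∨ cpath z (m + 1) - cpath z m = ii ∨
      cpath z (m + 1) - cpath z m = -ii := by
  simp only [Zsqrtd.ext_iff, Zsqrtd.re_sub, Zsqrtd.im_sub, cpath_re, cpath_im, ii, Zsqrtd.re_one,
    Zsqrtd.im_one, Zsqrtd.re_neg, Zsqrtd.im_neg]
  unfold cpathLen at *
  rcases int_sign_cases z.re with ⟨hr, hr'⟩ | ⟨hr, hr'⟩ | ⟨hr, hr'⟩ <;>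
    rcases int_sign_cases z.im with ⟨hi, hi'⟩ | ⟨hi, hi'⟩ | ⟨hi, hi'⟩ <;>
    simp only [hr, hi] <;> omega

lemma Zop_cpath (f : GaussianInt → ℂ) (z : GaussianInt) {m : ℕ} (hm : m ≤ cpathLen z) :
    Zop f (cpath z m) = (f 0 - f (cpath z m)) / 2 + discInt f (cpath z) m := by
  rw [Zop, cpathLen_cpath, min_eq_left hm]
  congr 1
  refine Finset.sum_congr rfl fun k hk => ?_
  rw [Finset.mem_range] at hk
  rw [cpath_cpath z hk.le hm, cpath_cpath z hk hm]

lemma Zop_cpath_succ (f : GaussianInt → ℂ) (z : GaussianInt) {m : ℕ} (hm : m < cpathLen z) :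
    Zop f (cpath z (m + 1)) = Zop f (cpath z m)
      + (1 + (cpath z (m + 1) - cpath z m : GaussianInt)) / 2 * f (cpath z m)
      + ((cpath z (m + 1) - cpath z m : GaussianInt) - 1) / 2 * f (cpath z (m + 1)) := by
  rw [Zop_cpath f z hm, Zop_cpath f z hm.le, discInt, discInt, Finset.sum_range_succ,
    GaussianInt.toComplex_sub]
  ring

lemma norm_div_two_of_sq_re_of_sq_im {w : ℂ} (hre : w.re ^ 2 = 1) (him : w.im ^ 2 = 1) :
    ‖w / 2‖ = (√2)⁻¹ := by
  rw [norm_div, Complex.norm_eq_sqrt_sq_add_sq w, hre, him, Complex.norm_two]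
  norm_num [Real.sqrt_div_self]

lemma norm_step_coeff_le {d : GaussianInt} (hd : d = 1 ∨ d = ii ∨ d = -ii) :
    ‖(1 + (d : ℂ)) / 2‖ ≤ 1 ∧ ‖((d : ℂ) - 1) / 2‖ ≤ (√2)⁻¹ := by
  have hI : ((ii : GaussianInt) : ℂ) = Complex.I := by simp [ii, GaussianInt.toComplex_def']
  have hsqrt : (√2)⁻¹ ≤ 1 := inv_le_one_of_one_le₀ (by norm_num [Real.one_le_sqrt])
  rcases hd with rfl | rfl | rfl
  · norm_num
  all_goals
    simp only [GaussianInt.toComplex_neg, hI]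
    rw [norm_div_two_of_sq_re_of_sq_im (by simp) (by simp),
      norm_div_two_of_sq_re_of_sq_im (by simp) (by simp)]
    exact ⟨hsqrt, le_rfl⟩

lemma norm_Zop_cpath_succ_le (f : GaussianInt → ℂ) {z : GaussianInt} (hz : 0 ≤ z.re) {m : ℕ}
    (hm : m < cpathLen z) :
    ‖Zop f (cpath z (m + 1))‖
      ≤ ‖Zop f (cpath z m)‖ + ‖f (cpath z m)‖ + (√2)⁻¹ * ‖f (cpath z (m + 1))‖ := by
  obtain ⟨h₁, h₂⟩ := norm_step_coeff_le (cpath_succ_sub_cpath hz hm)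
  rw [Zop_cpath_succ f z hm]
  refine (norm_add₃_le ..).trans (add_le_add (add_le_add le_rfl ?_) ?_) <;> rw [norm_mul]
  · exact mul_le_of_le_one_left (norm_nonneg _) h₁
  · exact mul_le_mul_of_nonneg_right h₂ (norm_nonneg _)

lemma zpoly_succ (n : ℕ) : zpoly (n + 1) = Zop (zpoly n) :=
  Function.iterate_succ_apply' Zop n _

lemma zpoly_succ_zero (n : ℕ) : zpoly (n + 1) 0 = 0 := by
  simp [zpoly_succ, Zop, cpathLen, discInt]

lemma pow_add_sqrt_two_mul_pow_add_pow_succ_le {b : ℝ} (hb : 0 ≤ b) (m : ℕ) :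
    (b + 3) ^ m + √2 * b ^ m + b ^ (m + 1) ≤ (b + 3) ^ (m + 1) := by
  have hpow : b ^ m ≤ (b + 3) ^ m := pow_le_pow_left₀ hb (by linarith) m
  have hsqrt : √2 ≤ 2 := by rw [Real.sqrt_le_left (by norm_num)]; norm_num
  rw [pow_succ, pow_succ]
  nlinarith [pow_nonneg hb m, Real.sqrt_nonneg 2]

theorem norm_zpoly_cpath_le {z : GaussianInt} (hz : 0 ≤ z.re) (n : ℕ) {m : ℕ}
    (hm : m ≤ cpathLen z) : ‖zpoly n (cpath z m)‖ ≤ (3 * n + 1 : ℝ) ^ m * (√2)⁻¹ ^ n := by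
  induction n generalizing m with
  | zero => simp [zpoly]
  | succ n ihn =>
    induction m with
    | zero => simp [cpath_zero, zpoly_succ_zero]
    | succ m ihm =>
      have hm' : m < cpathLen z := hm
      have hsqrt : √2 * (√2)⁻¹ = 1 := mul_inv_cancel₀ (by positivity)
      calc ‖zpoly (n + 1) (cpath z (m + 1))‖
          ≤ ‖zpoly (n + 1) (cpath z m)‖ + ‖zpoly n (cpath z m)‖
              + (√2)⁻¹ * ‖zpoly n (cpath z (m + 1))‖ := by
            rw [zpoly_succ]; exact norm_Zop_cpath_succ_le _ hz hm'
        _ ≤ (3 * n + 1 + 3 : ℝ) ^ m * (√2)⁻¹ ^ (n + 1) + (3 * n + 1 : ℝ) ^ m * (√2)⁻¹ ^ n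
              + (√2)⁻¹ * ((3 * n + 1 : ℝ) ^ (m + 1) * (√2)⁻¹ ^ n) := by
            gcongr
            · exact (ihm hm'.le).trans_eq (by push_cast; ring)
            · exact ihn hm'.le
            · exact ihn hm
        _ = ((3 * n + 1 + 3 : ℝ) ^ m + √2 * (3 * n + 1 : ℝ) ^ m + (3 * n + 1 : ℝ) ^ (m + 1))
              * (√2)⁻¹ ^ (n + 1) := by
            rw [pow_succ (√2)⁻¹ n]
            linear_combination -(3 * n + 1 : ℝ) ^ m * (√2)⁻¹ ^ n * hsqrt
        _ ≤ ((3 * (n + 1 : ℕ) + 1 : ℝ)) ^ (m + 1) * (√2)⁻¹ ^ (n + 1) := by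
            gcongr
            exact (pow_add_sqrt_two_mul_pow_add_pow_succ_le (by positivity) m).trans_eq
              (by push_cast; ring)

lemma tendsto_linear_pow_mul_pow_atTop_nhds_zero {a b q : ℝ} (ha : 0 ≤ a) (hb : 0 ≤ b)
    (hq₀ : 0 ≤ q) (hq₁ : q < 1) (L : ℕ) :
    Tendsto (fun n : ℕ => (a * n + b) ^ L * q ^ n) atTop (𝓝 0) := by
  have hlim := (tendsto_pow_const_mul_const_pow_of_abs_lt_one L
    (abs_lt.2 ⟨by linarith, hq₁⟩)).const_mul ((a + b) ^ L)
  rw [mul_zero] at hlim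
  refine squeeze_zero' (Eventually.of_forall fun n => by positivity) ?_ hlim
  filter_upwards [eventually_ge_atTop 1] with n hn
  have hn' : (1 : ℝ) ≤ n := by exact_mod_cast hn
  rw [← mul_assoc, ← mul_pow]
  gcongr
  nlinarith

/-- For `z ∈ Λ₊`, `limsup |z⁽ⁿ⁾(z)|^{1/n} ≤ 1/√2`; equivalently, for every
`r > 1/√2` the sequence `|z⁽ⁿ⁾(z)|/rⁿ` is bounded. -/
theorem stmt9 (z : GaussianInt) (hz : 0 ≤ z.re) (r : ℝ) (hr : 1 / Real.sqrt 2 < r) :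
    ∃ C : ℝ, ∀ n : ℕ, ‖zpoly n z‖ / r ^ n ≤ C := by
  have hr₀ : 0 < r := lt_trans (by positivity) hr
  have hq : (√2)⁻¹ / r < 1 := by rwa [div_lt_one hr₀, ← one_div]
  obtain ⟨C, hC⟩ := (tendsto_linear_pow_mul_pow_atTop_nhds_zero (a := 3) (by norm_num) zero_le_one
    (by positivity) hq (cpathLen z)).bddAbove_range
  refine ⟨C, fun n => ?_⟩
  calc ‖zpoly n z‖ / r ^ n ≤ (3 * n + 1 : ℝ) ^ cpathLen z * (√2)⁻¹ ^ n / r ^ n := by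
        gcongr
        simpa only [cpath_cpathLen] using norm_zpoly_cpath_le hz n le_rfl
    _ = (3 * n + 1 : ℝ) ^ cpathLen z * ((√2)⁻¹ / r) ^ n := by rw [div_pow, mul_div_assoc]
    _ ≤ C := hC ⟨n, rfl⟩

end
end
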